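/- arXiv:2311.01183 — 3 statements merged into one kernel-verified Lean document; each statement's English description precedes it below -/
import Mathlib

section
/- Fix a ∈ (0, π/2) and α ∈ (π/3, π/2) with cos a = cot α · cot(α/2), and let k ≥ 0 be a real constant. Then the system cos a = cot(β/2)·cot(γ/2), β = k·γ + (2−k)·α has at most one solution (β, γ) with γ ∈ (0, π), namely (β, γ) = (2α, α). -/
open Real

lemma cot_anti' {x y : ℝ} (hx : 0 < x) (hy : y < π) (hxy : x < y) :
    Real.cot y < Real.cot x := by
  have sx : 0 < Real.sin x := Real.sin_pos_of_pos_of_lt_pi hx (hxy.trans hy)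
  have sy : 0 < Real.sin y := Real.sin_pos_of_pos_of_lt_pi (hx.trans hxy) hy
  have sd : 0 < Real.sin (y - x) :=
    Real.sin_pos_of_pos_of_lt_pi (by linarith) (by linarith)
  have h : Real.cot x - Real.cot y = Real.sin (y - x) / (Real.sin x * Real.sin y) := by
    rw [Real.cot_eq_cos_div_sin, Real.cot_eq_cos_div_sin, Real.sin_sub]
    field_simp
  have : 0 < Real.cot x - Real.cot y := by
    rw [h]; positivity
  linarith

lemma cot_anti_le {x y : ℝ} (hx : 0 < x) (hy : y < π) (hxy : x ≤ y) :
    Real.cot y ≤ Real.cot x := by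
  rcases eq_or_lt_of_le hxy with rfl | h
  · exact le_refl _
  · exact (cot_anti' hx hy h).le

lemma cot_pos' {x : ℝ} (hx : 0 < x) (hx2 : x < π / 2) : 0 < Real.cot x := by
  have := Real.pi_pos
  have sx : 0 < Real.sin x := Real.sin_pos_of_pos_of_lt_pi hx (by linarith)
  have cx : 0 < Real.cos x := Real.cos_pos_of_mem_Ioo ⟨by linarith, hx2⟩
  rw [Real.cot_eq_cos_div_sin]; positivity

theorem unique_solution_icosahedral (a α k : ℝ)
    (ha : a ∈ Set.Ioo 0 (π / 2)) (hα : α ∈ Set.Ioo (π / 3) (π / 2))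
    (hcos : cos a = cot α * cot (α / 2)) (hk : 0 ≤ k) :
    ∀ β γ : ℝ, β ∈ Set.Ioo 0 (2 * π) → γ ∈ Set.Ioo 0 π →
      cos a = cot (β / 2) * cot (γ / 2) →
      β = k * γ + (2 - k) * α →
      β = 2 * α ∧ γ = α := by
  intro β γ hβ hγ heq hlin
  have hπ := Real.pi_pos
  obtain ⟨ha1, ha2⟩ := ha
  obtain ⟨hα1, hα2⟩ := hα
  obtain ⟨hβ1, hβ2⟩ := hβ
  obtain ⟨hγ1, hγ2⟩ := hγ
  have hα0 : 0 < α := by linarith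
  have hca : 0 < Real.cos a := Real.cos_pos_of_mem_Ioo ⟨by linarith, ha2⟩
  have hcotγ : 0 < Real.cot (γ / 2) := cot_pos' (by linarith) (by linarith)
  have hcotβ : 0 < Real.cot (β / 2) := by
    have := heq
    nlinarith
  have hcotα : 0 < Real.cot α := cot_pos' hα0 hα2
  have hcotα2 : 0 < Real.cot (α / 2) := cot_pos' (by linarith) (by linarith)
  -- β/2 < π/2
  have hβhalf : β / 2 < π / 2 := by
    by_contra h
    push_neg at h
    have hs : 0 < Real.sin (β / 2) :=
      Real.sin_pos_of_pos_of_lt_pi (by linarith) (by linarith)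
    have hc : Real.cos (β / 2) ≤ 0 := by
      rcases lt_or_ge (β / 2) π with h' | h'
      · exact Real.cos_nonpos_of_pi_div_two_le_of_le h (by linarith)
      · linarith
    have : Real.cot (β / 2) ≤ 0 := by
      rw [Real.cot_eq_cos_div_sin]
      exact div_nonpos_of_nonpos_of_nonneg hc hs.le
    linarith
  rcases lt_trichotomy γ α with h | h | h
  · exfalso
    have hβle : β ≤ 2 * α := by nlinarith
    have h1 : Real.cot α ≤ Real.cot (β / 2) :=
      cot_anti_le (by linarith) (by linarith) (by linarith)
    have h2 : Real.cot (α / 2) < Real.cot (γ / 2) :=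
      cot_anti' (by linarith) (by linarith) (by linarith)
    nlinarith
  · refine ⟨?_, h⟩
    rw [hlin, h]; ring
  · exfalso
    have hβge : 2 * α ≤ β := by nlinarith
    have h1 : Real.cot (β / 2) ≤ Real.cot α :=
      cot_anti_le hα0 (by linarith) (by linarith)
    have h2 : Real.cot (γ / 2) < Real.cot (α / 2) :=
      cot_anti' (by linarith) (by linarith) (by linarith)
    nlinarith
end

section
/- Suppose β = γ for a convex spherical rhombus of side a ∈ (0, π/2) sharing its side with a regular triangle of angle α ∈ (π/3, π/2), i.e., cot(β/2)² = cos a = cot α · cot(α/2) with β ∈ (0, π). Then α < β < 2α. -/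
open Real

lemma cot_eq_inv_tan' {x : ℝ} : Real.cot x = (Real.tan x)⁻¹ := by
  rw [Real.cot_eq_cos_div_sin, Real.tan_eq_sin_div_cos, inv_div]

lemma tan_pos' {x : ℝ} (h1 : 0 < x) (h2 : x < π / 2) : 0 < Real.tan x :=
  Real.tan_pos_of_pos_of_lt_pi_div_two h1 h2

lemma mem_tan {x : ℝ} (h1 : 0 < x) (h2 : x < π / 2) :
    x ∈ Set.Ioo (-(π/2)) (π/2) := ⟨by linarith [Real.pi_pos], h2⟩

theorem beta_between_alpha_and_two_alpha (a α β : ℝ)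
    (ha : a ∈ Set.Ioo 0 (π / 2)) (hα : α ∈ Set.Ioo (π / 3) (π / 2))
    (hβ : β ∈ Set.Ioo 0 π)
    (hrhombus : cot (β / 2) ^ 2 = cos a)
    (htriangle : cos a = cot α * cot (α / 2)) :
    α < β ∧ β < 2 * α := by
  obtain ⟨hα1, hα2⟩ := hα
  obtain ⟨hβ1, hβ2⟩ := hβ
  have hπ := Real.pi_pos
  have hα0 : 0 < α := by linarith
  have hA2a : 0 < α / 2 := by linarith
  have hA2b : α / 2 < π / 2 := by linarith
  have hB2a : 0 < β / 2 := by linarith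
  have hB2b : β / 2 < π / 2 := by linarith
  have htα : 0 < Real.tan α := tan_pos' hα0 hα2
  have htα2 : 0 < Real.tan (α / 2) := tan_pos' hA2a hA2b
  have htβ2 : 0 < Real.tan (β / 2) := tan_pos' hB2a hB2b
  have htmono : Real.tan (α / 2) < Real.tan α :=
    Real.strictMonoOn_tan (mem_tan hA2a hA2b) (mem_tan hα0 hα2) (by linarith)
  have hcα : Real.cot α = (Real.tan α)⁻¹ := cot_eq_inv_tan'
  have hcα2 : Real.cot (α / 2) = (Real.tan (α / 2))⁻¹ := cot_eq_inv_tan'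
  have hcβ2 : Real.cot (β / 2) = (Real.tan (β / 2))⁻¹ := cot_eq_inv_tan'
  have hpα : 0 < Real.cot α := by rw [hcα]; positivity
  have hpα2 : 0 < Real.cot (α / 2) := by rw [hcα2]; positivity
  have hpβ2 : 0 < Real.cot (β / 2) := by rw [hcβ2]; positivity
  have hcotlt : Real.cot α < Real.cot (α / 2) := by
    rw [hcα, hcα2]
    exact inv_strictAnti₀ htα2 htmono
  have hsq := hrhombus.trans htriangle
  -- upper bound: cot(β/2)^2 > cot α ^ 2 so cot α < cot(β/2), tan(β/2) < tan α, β/2 < α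
  have h1 : Real.cot α ^ 2 < Real.cot (β / 2) ^ 2 := by
    rw [hsq]; nlinarith
  have h2 : Real.cot (β / 2) ^ 2 < Real.cot (α / 2) ^ 2 := by
    rw [hsq]; nlinarith
  have hlt1 : Real.cot α < Real.cot (β / 2) := by nlinarith
  have hlt2 : Real.cot (β / 2) < Real.cot (α / 2) := by nlinarith
  have htan1 : Real.tan (β / 2) < Real.tan α := by
    rw [hcα, hcβ2] at hlt1
    exact (inv_lt_inv₀ htα htβ2).mp hlt1
  have htan2 : Real.tan (α / 2) < Real.tan (β / 2) := by
    rw [hcα2, hcβ2] at hlt2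
    exact (inv_lt_inv₀ htβ2 htα2).mp hlt2
  have hb1 : β / 2 < α :=
    (Real.strictMonoOn_tan.lt_iff_lt (mem_tan hB2a hB2b) (mem_tan hα0 hα2)).mp htan1
  have hb2 : α / 2 < β / 2 :=
    (Real.strictMonoOn_tan.lt_iff_lt (mem_tan hA2a hA2b) (mem_tan hB2a hB2b)).mp htan2
  constructor <;> linarith
end

section
/- For each integer n ≥ 3, the equation cos((2n−1)β) = cos β / (2 cos β − 1) has a unique solution β in the interval (π − (2π/3)/(2n−1), π − (π/2)/(2n−1)). Moreover this solution β = β(n) is strictly increasing in n and β(n) → π as n → ∞. -/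
open Real Filter
namespace BetaAux

lemma cos_shift (n : ℕ) (y : ℝ) : cos (y + ((n:ℝ)-1)*(2*π)) = cos y := by
  have h := Real.cos_add_int_mul_two_pi y ((n:ℤ)-1); push_cast at h; exact h

lemma sin_shift (n : ℕ) (y : ℝ) : sin (y + ((n:ℝ)-1)*(2*π)) = sin y := by
  have h := Real.sin_add_int_mul_two_pi y ((n:ℤ)-1); push_cast at h; exact h

lemma sin_two_thirds {x : ℝ} (h1 : π/3 ≤ x) (h2 : x ≤ π/2) : 2/3 ≤ sin x := by
  have h0 : 0 ≤ x := le_trans (by positivity) h1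
  have hms := Real.mul_le_sin h0 h2
  have : 2/3 ≤ 2/π * x := by
    rw [div_mul_eq_mul_div, le_div_iff₀ pi_pos]
    nlinarith [pi_pos]
  linarith

noncomputable def gfun (m : ℝ) : ℝ → ℝ := fun β => cos (m*β) * (2*cos β - 1) - cos β

lemma gfun_cont (m : ℝ) : Continuous (gfun m) := by unfold gfun; continuity

lemma gfun_hasDeriv (m x : ℝ) :
    HasDerivAt (gfun m)
      ((-sin (m*x) * m) * (2*cos x - 1) + cos (m*x) * (2 * -sin x) + sin x) x := by
  have h1 : HasDerivAt (fun β : ℝ => m * β) m x := by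
    simpa using (hasDerivAt_id x).const_mul m
  have h2 : HasDerivAt (fun β : ℝ => cos (m*β)) (-sin (m*x) * m) x := by
    exact (Real.hasDerivAt_cos (m*x)).comp x h1
  have h3 : HasDerivAt (fun β : ℝ => 2*cos β - 1) (2 * -sin x) x :=
    ((Real.hasDerivAt_cos x).const_mul 2).sub_const 1
  have h4 := (h2.mul h3).sub (Real.hasDerivAt_cos x)
  unfold gfun; exact h4.congr_deriv (by ring)

set_option maxHeartbeats 800000 in
lemma key (n : ℕ) (hn : 3 ≤ n) :
    ∃! β : ℝ, β ∈ Set.Ioo (π - (2 * π / 3) / (2 * (n : ℝ) - 1)) (π - (π / 2) / (2 * (n : ℝ) - 1)) ∧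
      cos ((2 * (n : ℝ) - 1) * β) = cos β / (2 * cos β - 1) := by
  have hπ := pi_pos
  set m : ℝ := 2 * (n : ℝ) - 1 with hm_def
  clear_value m
  have hn3 : (3:ℝ) ≤ (n:ℝ) := by exact_mod_cast hn
  have hm5 : (5:ℝ) ≤ m := by rw [hm_def]; linarith
  have hm0 : (0:ℝ) < m := by linarith
  set a : ℝ := π - (2 * π / 3) / m with ha_def
  set b : ℝ := π - (π / 2) / m with hb_def
  clear_value a b
  have hdiva : (2 * π / 3) / m ≤ 2 * π / 15 := by
    rw [div_le_iff₀ hm0]; nlinarith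
  have hdivb : 0 < (π / 2) / m := by positivity
  have ha23 : 2 * π / 3 < a := by rw [ha_def]; nlinarith
  have hbπ : b < π := by rw [hb_def]; linarith
  have hab : a < b := by
    rw [ha_def, hb_def]
    have : (π / 2)/m < (2 * π / 3)/m := (div_lt_div_iff_of_pos_right hm0).mpr (by linarith)
    linarith
  have hma : m * a = π/3 + ((n:ℝ)-1)*(2*π) := by
    rw [ha_def]; field_simp; linear_combination (3) * hm_def
  have hmb : m * b = π/2 + ((n:ℝ)-1)*(2*π) := by
    rw [hb_def]; field_simp; linear_combination (2) * hm_def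
  -- basic facts on Icc a b
  have hcosIcc : ∀ x ∈ Set.Icc a b, cos x < -(1/2) := by
    intro x hx
    have hx1 : 2*π/3 < x := lt_of_lt_of_le ha23 hx.1
    have hx2 : x ≤ π := le_trans hx.2 hbπ.le
    have h := Real.strictAntiOn_cos ⟨by linarith, by linarith⟩ ⟨by linarith, hx2⟩ hx1
    rw [show 2*π/3 = π - π/3 by ring, Real.cos_pi_sub, Real.cos_pi_div_three] at h
    linarith
  -- strict monotonicity of gfun m on Icc a b
  have hmono : StrictMonoOn (gfun m) (Set.Icc a b) := by
    apply strictMonoOn_of_deriv_pos (convex_Icc a b) (gfun_cont m).continuousOn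
    intro x hx
    rw [interior_Icc] at hx
    rw [(gfun_hasDeriv m x).deriv]
    obtain ⟨hax, hxb⟩ := hx
    have hx1 : 2*π/3 < x := lt_trans ha23 hax
    have hx2 : x < π := hxb.trans hbπ
    have hsinx : 0 < sin x := sin_pos_of_pos_of_lt_pi (by linarith) hx2
    have hsinx1 : sin x ≤ 1 := sin_le_one x
    have hcosx : cos x < -(1/2) := hcosIcc x ⟨hax.le, hxb.le⟩
    set s : ℝ := m*x - ((n:ℝ)-1)*(2*π) with hs_def
    clear_value s
    have hs1 : π/3 < s := by
      have := (mul_lt_mul_iff_right₀ hm0).mpr hax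
      rw [hma] at this; rw [hs_def]; linarith
    have hs2 : s < π/2 := by
      have := (mul_lt_mul_iff_right₀ hm0).mpr hxb
      rw [hmb] at this; rw [hs_def]; linarith
    have hmxs : m*x = s + ((n:ℝ)-1)*(2*π) := by rw [hs_def]; ring
    have hcosmx : cos (m*x) = cos s := by rw [hmxs, cos_shift]
    have hsinmx : sin (m*x) = sin s := by rw [hmxs, sin_shift]
    have hsins : 2/3 ≤ sin s := sin_two_thirds hs1.le hs2.le
    have hcoss0 : 0 < cos s := cos_pos_of_mem_Ioo ⟨by linarith, hs2⟩
    have hcossub : cos s ≤ 1/2 := by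
      have h := Real.strictAntiOn_cos ⟨by positivity, by linarith⟩ ⟨by linarith, by linarith⟩ hs1
      rw [Real.cos_pi_div_three] at h; linarith
    rw [hcosmx, hsinmx]
    have t1 : 10/3 ≤ m * sin s := by
      have := mul_le_mul hm5 hsins (by norm_num) (by linarith : (0:ℝ) ≤ m)
      linarith
    have t2 : (2:ℝ) ≤ -(2*cos x - 1) := by linarith
    have t3 : 20/3 ≤ (m * sin s) * (-(2*cos x - 1)) := by
      have := mul_le_mul t1 t2 (by norm_num) (by linarith : (0:ℝ) ≤ m * sin s)
      linarith
    have t4 : cos s * sin x ≤ (1/2) * sin x := mul_le_mul_of_nonneg_right hcossub hsinx.le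
    nlinarith [t3, t4, hsinx.le]
  -- endpoint values
  have hga : gfun m a = -(1/2) := by
    unfold gfun
    rw [hma, cos_shift, Real.cos_pi_div_three]; ring
  have hgb : gfun m b = -cos b := by
    unfold gfun
    rw [hmb, cos_shift, Real.cos_pi_div_two]; ring
  have hgbpos : 0 < gfun m b := by
    rw [hgb]
    have : cos b < 0 := cos_neg_of_pi_div_two_lt_of_lt (by linarith) (by linarith)
    linarith
  -- IVT
  have hivt := intermediate_value_Ioo hab.le (gfun_cont m).continuousOn
  have h0mem : (0:ℝ) ∈ Set.Ioo (gfun m a) (gfun m b) := by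
    constructor
    · rw [hga]; linarith
    · exact hgbpos
  obtain ⟨x, hxmem, hgx⟩ := hivt h0mem
  -- equation equivalence
  have heq : ∀ y ∈ Set.Icc a b,
      (cos (m*y) = cos y / (2*cos y - 1) ↔ gfun m y = 0) := by
    intro y hy
    have hD : 2*cos y - 1 < 0 := by have := hcosIcc y hy; linarith
    rw [eq_div_iff hD.ne]
    unfold gfun
    constructor <;> intro h <;> linarith
  refine ⟨x, ⟨hxmem, ?_⟩, ?_⟩
  · exact (heq x (Set.Ioo_subset_Icc_self hxmem)).mpr hgx
  · intro y ⟨hymem, hyeq⟩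
    have hgy : gfun m y = 0 := (heq y (Set.Ioo_subset_Icc_self hymem)).mp hyeq
    exact hmono.injOn (Set.Ioo_subset_Icc_self hymem) (Set.Ioo_subset_Icc_self hxmem)
      (hgy.trans hgx.symm)

noncomputable def B (n : ℕ) : ℝ := if h : 3 ≤ n then (key n h).exists.choose else 0

lemma B_spec (n : ℕ) (hn : 3 ≤ n) :
    B n ∈ Set.Ioo (π - (2 * π / 3) / (2 * (n : ℝ) - 1)) (π - (π / 2) / (2 * (n : ℝ) - 1)) ∧
      cos ((2 * (n : ℝ) - 1) * B n) = cos (B n) / (2 * cos (B n) - 1) := by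
  rw [B, dif_pos hn]
  exact (key n hn).exists.choose_spec

noncomputable def sA (n : ℕ) : ℝ := (2*(n:ℝ)-1) * B n - ((n:ℝ)-1)*(2*π)

set_option maxHeartbeats 1000000 in
/-- the band estimate for the reduced angle `s = m β - (n-1)·2π`. -/
lemma band (n : ℕ) (hn : 3 ≤ n) :
    π/3 < sA n ∧ sA n < π/2 ∧
    1/3 - 1/(2*(n:ℝ)-1)^2 ≤ cos (sA n) ∧ cos (sA n) ≤ 1/3 := by
  unfold sA
  have hπ := pi_pos
  obtain ⟨hmem, heq⟩ := B_spec n hn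
  set β : ℝ := B n with hβ_def
  clear_value β
  set m : ℝ := 2 * (n : ℝ) - 1 with hm_def
  have hn3 : (3:ℝ) ≤ (n:ℝ) := by exact_mod_cast hn
  have hm5 : (5:ℝ) ≤ m := by rw [hm_def]; linarith
  have hm0 : (0:ℝ) < m := by linarith
  clear_value m
  have hma : m * (π - (2 * π / 3) / m) = π/3 + ((n:ℝ)-1)*(2*π) := by
    field_simp; linear_combination (3) * hm_def
  have hmb : m * (π - (π / 2) / m) = π/2 + ((n:ℝ)-1)*(2*π) := by
    field_simp; linear_combination (2) * hm_def
  obtain ⟨hβa, hβb⟩ := hmem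
  set s : ℝ := m * β - ((n:ℝ)-1)*(2*π) with hs_def
  clear_value s
  have hs1 : π/3 < s := by
    have := (mul_lt_mul_iff_right₀ hm0).mpr hβa
    rw [hma] at this; rw [hs_def]; linarith
  have hs2 : s < π/2 := by
    have := (mul_lt_mul_iff_right₀ hm0).mpr hβb
    rw [hmb] at this; rw [hs_def]; linarith
  have hdiva : (2 * π / 3) / m ≤ 2 * π / 15 := by
    rw [div_le_iff₀ hm0]; nlinarith
  have hβ1 : 2*π/3 < β := by nlinarith
  have hβ2 : β < π := by
    have : 0 < (π / 2) / m := by positivity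
    linarith
  have hcosβ : cos β < -(1/2) := by
    have h := Real.strictAntiOn_cos ⟨by linarith, by linarith⟩ ⟨by linarith, hβ2.le⟩ hβ1
    rw [show 2*π/3 = π - π/3 by ring, Real.cos_pi_sub, Real.cos_pi_div_three] at h
    linarith
  have hD : 2*cos β - 1 < -2 := by linarith
  have hDne : (2*cos β - 1) ≠ 0 := by linarith
  have hmβ : m * β = s + ((n:ℝ)-1)*(2*π) := by rw [hs_def]; ring
  have hcoss : cos s = cos β / (2*cos β - 1) := by
    rw [← cos_shift n s, ← hmβ]; exact heq
  have hid : cos β/(2*cos β - 1) - 1/3 = (cos β + 1)/(3*(2*cos β - 1)) := by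
    rw [div_sub_div _ _ hDne (by norm_num), div_eq_div_iff (mul_ne_zero hDne (by norm_num)) (mul_ne_zero (by norm_num) hDne)]
    ring
  refine ⟨hs1, hs2, ?_, ?_⟩
  · -- lower bound
    have hu : cos β + 1 ≤ (π - β)^2/2 := by
      have h1 := Real.cos_pi_sub (π - β)
      rw [show π - (π - β) = β by ring] at h1
      have h2 := Real.one_sub_sq_div_two_le_cos (x := π - β)
      linarith
    have hub : (π - β) * m < 2*π/3 := by
      have h5 : π - β < (2 * π / 3)/m := by linarith
      rwa [lt_div_iff₀ hm0] at h5
    have h3 : ((π-β)*m)^2 ≤ (2*π/3)^2 := by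
      have hnn : (0:ℝ) ≤ (π-β)*m := mul_nonneg (by linarith) hm0.le
      nlinarith
    have h4 := mul_le_mul_of_nonneg_right hu (sq_nonneg m)
    have hπ2 : π^2 ≤ 10 := by nlinarith [Real.pi_lt_d2, hπ]
    have hK : (cos β + 1) * m^2 ≤ 3 := by nlinarith [h3, h4, hπ2]
    have hgoal : -(1/m^2) ≤ (cos β + 1)/(3*(2*cos β - 1)) := by
      rw [le_div_iff_of_neg (by linarith : 3*(2*cos β - 1) < 0)]
      rw [show -(1/m^2) * (3*(2*cos β - 1)) = (-(3*(2*cos β - 1)))/m^2 by ring]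
      rw [le_div_iff₀ (by positivity : (0:ℝ) < m^2)]
      nlinarith [hK, hD]
    rw [hcoss]
    linarith [hgoal, hid]
  · -- upper bound
    rw [hcoss, div_le_iff_of_neg (by linarith : 2*cos β - 1 < 0)]
    have := Real.neg_one_le_cos β
    linarith

set_option maxHeartbeats 1000000 in
lemma step (n : ℕ) (hn : 3 ≤ n) : B n < B (n+1) := by
  have hπ := pi_pos
  obtain ⟨hs1a, hs1b, hc1lb, _⟩ := band n hn
  obtain ⟨hs2a, hs2b, _, hc2ub⟩ := band (n+1) (by omega)
  set m : ℝ := 2*(n:ℝ)-1 with hm_def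
  have hn3 : (3:ℝ) ≤ (n:ℝ) := by exact_mod_cast hn
  have hm5 : (5:ℝ) ≤ m := by rw [hm_def]; linarith
  have hm0 : (0:ℝ) < m := by linarith
  clear_value m
  have hm20 : (0:ℝ) < m + 2 := by linarith
  have hd : sA n - sA (n+1) ≤ (3*π/4)/m^2 := by
    rcases le_or_gt (sA n) (sA (n+1)) with hle | hlt
    · have hpos : 0 < (3*π/4)/m^2 := div_pos (by positivity) (pow_pos hm0 2)
      linarith
    · have hC : cos (sA (n+1)) - cos (sA n) ≤ 1/m^2 := by linarith
      have hform := Real.cos_sub_cos (sA (n+1)) (sA n)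
      have hsinneg : sin ((sA (n+1) - sA n)/2) = - sin ((sA n - sA (n+1))/2) := by
        rw [show (sA (n+1) - sA n)/2 = -((sA n - sA (n+1))/2) by ring, Real.sin_neg]
      have hsmean : 2/3 ≤ sin ((sA (n+1) + sA n)/2) :=
        sin_two_thirds (by linarith) (by linarith)
      have hd0 : 0 < (sA n - sA (n+1))/2 := by linarith
      have hdu : (sA n - sA (n+1))/2 ≤ π/2 := by linarith
      have hs := Real.mul_le_sin hd0.le hdu
      have hsinnn : 0 ≤ 2/π * ((sA n - sA (n+1))/2) := by positivity
      have hprod := mul_le_mul hsmean hs hsinnn (by linarith)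
      have hL : (2:ℝ)*((2/3) * (2/π * ((sA n - sA (n+1))/2))) = (4*(sA n - sA (n+1))/3)/π := by
        field_simp; ring
      have hfin : (4*(sA n - sA (n+1))/3)/π ≤ 1/m^2 := by
        rw [← hL]
        nlinarith [hprod, hform, hsinneg, hC]
      rw [div_le_div_iff₀ pi_pos (pow_pos hm0 2)] at hfin
      rw [le_div_iff₀ (pow_pos hm0 2)]
      linarith
  have hmd : m*(sA n - sA (n+1)) ≤ 3*π/20 := by
    have h6 : m*((3*π/4)/m^2) = (3*π/4)/m := by field_simp
    have h7 := mul_le_mul_of_nonneg_left hd hm0.le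
    have h8 : (3*π/4)/m ≤ (3*π/4)/5 := by
      apply div_le_div_of_nonneg_left (by positivity) (by norm_num) hm5
    rw [h6] at h7
    linarith
  have hB1 : B n = (sA n + ((n:ℝ)-1)*(2*π))/m := by
    rw [eq_div_iff hm0.ne']
    unfold sA; rw [hm_def]; ring
  have hB2 : B (n+1) = (sA (n+1) + (n:ℝ)*(2*π))/(m+2) := by
    rw [eq_div_iff hm20.ne']
    unfold sA; push_cast; rw [hm_def]; ring
  rw [hB1, hB2, div_lt_div_iff₀ hm0 hm20]
  have h2pm : 2*π*m = 4*π*(n:ℝ) - 2*π := by rw [hm_def]; ring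
  nlinarith [hmd, hs1b, hπ, h2pm]

end BetaAux

theorem beta_n_exists_unique_monotone_tendsto :
    ∃ B : ℕ → ℝ,
      (∀ n : ℕ, 3 ≤ n →
        B n ∈ Set.Ioo (π - (2 * π / 3) / (2 * (n : ℝ) - 1)) (π - (π / 2) / (2 * (n : ℝ) - 1)) ∧
        cos ((2 * (n : ℝ) - 1) * B n) = cos (B n) / (2 * cos (B n) - 1) ∧
        ∀ β ∈ Set.Ioo (π - (2 * π / 3) / (2 * (n : ℝ) - 1)) (π - (π / 2) / (2 * (n : ℝ) - 1)),
          cos ((2 * (n : ℝ) - 1) * β) = cos β / (2 * cos β - 1) → β = B n) ∧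
      StrictMonoOn B (Set.Ici 3) ∧
      Tendsto B atTop (nhds π) := by
  refine ⟨BetaAux.B, ?_, ?_, ?_⟩
  · intro n hn
    obtain ⟨hmem, heq⟩ := BetaAux.B_spec n hn
    exact ⟨hmem, heq, fun β hβ hβeq => (BetaAux.key n hn).unique ⟨hβ, hβeq⟩ ⟨hmem, heq⟩⟩
  · intro a ha b hb hab
    have key2 : ∀ p q : ℕ, 3 ≤ p → p < q → BetaAux.B p < BetaAux.B q := by
      intro p q hp hpq
      induction q with
      | zero => omega
      | succ q ih =>
        rcases Nat.lt_succ_iff_lt_or_eq.mp hpq with h | h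
        · exact (ih h).trans (BetaAux.step q (by omega))
        · subst h; exact BetaAux.step p hp
    exact key2 a b (Set.mem_Ici.mp ha) hab
  · have h2 : Tendsto (fun k : ℕ => 2*(k:ℝ)-1) atTop atTop := by
      apply tendsto_atTop_add_const_right
      exact Tendsto.const_mul_atTop two_pos tendsto_natCast_atTop_atTop
    have h3 : Tendsto (fun k : ℕ => (2*π/3)/(2*(k:ℝ)-1)) atTop (nhds 0) :=
      Tendsto.div_atTop tendsto_const_nhds h2
    have hlow : Tendsto (fun k : ℕ => π - (2*π/3)/(2*(k:ℝ)-1)) atTop (nhds π) := by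
      simpa using (tendsto_const_nhds (x := π) (f := atTop)).sub h3
    apply tendsto_of_tendsto_of_tendsto_of_le_of_le' hlow tendsto_const_nhds
    · filter_upwards [eventually_ge_atTop 3] with k hk
      exact ((BetaAux.B_spec k hk).1.1).le
    · filter_upwards [eventually_ge_atTop 3] with k hk
      have hk3 : (3:ℝ) ≤ (k:ℝ) := by exact_mod_cast hk
      have hub := (BetaAux.B_spec k hk).1.2
      have hpos : 0 < (π/2)/(2*(k:ℝ)-1) := div_pos (by positivity) (by linarith)
      linarith
end
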